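/- Let L be a split δ Jordan-Lie algebra with symmetric root system Λ, with trivial center Z(L) = 0 and satisfying [L,L] = L. Then L is the direct sum L = ⊕_{[α]∈Λ/~} I_{[α]} of the ideals I_{[α]} associated to the connection equivalence classes. -/

import Mathlib

/-!
Root spaces of roots that are not connected commute: a nonzero bracket
`[L_ε, L_γ] ⊆ L_{δ(ε+γ)}` would itself connect `ε` to `γ`. Hence every bracket of root vectors
lies in `Σ I_[α]`, which therefore contains `[L, L] = L`. An element `x` of `I_[α]` and of the
sum of the other ideals lies in `L_0 = H` by independence of the root spaces, and brackets to
zero with each `L_γ`, through whichever of the two ideals misses the class of `γ`; so `x` is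
central, hence zero.
-/

/-- A δ Jordan-Lie algebra: a vector space with a bilinear bracket satisfying
`[x,y] = -δ[y,x]` and `[x,[y,z]] = δ[[x,y],z] + δ[y,[x,z]]` with `δ = ±1`. -/
structure DeltaJordanLie (K L : Type*) [Field K] [AddCommGroup L] [Module K L] where
  br : L →ₗ[K] L →ₗ[K] L
  delta : K
  delta_pm : delta = 1 ∨ delta = -1
  anti : ∀ x y : L, br x y = -(delta • br y x)
  jacobi : ∀ x y z : L, br x (br y z) = delta • br (br x y) z + delta • br y (br x z)

variable {K L : Type*} [Field K] [AddCommGroup L] [Module K L]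

/-- The root space `L_α = {v ∈ L : [h,v] = α(h)v for all h ∈ H}`. -/
def DeltaJordanLie.rootSpace (J : DeltaJordanLie K L) (H : Submodule K L)
    (α : Module.Dual K H) : Submodule K L where
  carrier := {v : L | ∀ h : H, J.br (h : L) v = α h • v}
  zero_mem' := by intro h; simp
  add_mem' := by intro a b ha hb h; simp [ha h, hb h, smul_add]
  smul_mem' := by intro c a ha h; rw [map_smul, ha h, smul_comm]

/-- The root system `Λ = {α ∈ H* \ {0} : L_α ≠ 0}`. -/
def DeltaJordanLie.roots (J : DeltaJordanLie K L) (H : Submodule K L) :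
    Set (Module.Dual K H) :=
  {α | α ≠ 0 ∧ J.rootSpace H α ≠ ⊥}

/-- `H` is a splitting Cartan subalgebra: a maximal abelian subalgebra such that
`L` decomposes as the direct sum of the simultaneous eigenspaces `L_α`, with `L_0 = H`. -/
structure DeltaJordanLie.IsSplitting (J : DeltaJordanLie K L) (H : Submodule K L) : Prop where
  abelian : ∀ x ∈ H, ∀ y ∈ H, J.br x y = 0
  maximal : ∀ H' : Submodule K L, H ≤ H' →
      (∀ x ∈ H', ∀ y ∈ H', J.br x y = 0) → H' = H
  zero_rootSpace : J.rootSpace H 0 = H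
  indep : iSupIndep (fun α : Module.Dual K H => J.rootSpace H α)
  decomp : (⨆ α : Module.Dual K H, J.rootSpace H α) = ⊤

/-- The root system is symmetric. -/
def DeltaJordanLie.SymmetricRoots (J : DeltaJordanLie K L) (H : Submodule K L) : Prop :=
  ∀ α ∈ J.roots H, -α ∈ J.roots H

/-- The δ-twisted partial sums of a sequence of roots:
`s₀ = f 0`, `s_{k+1} = δ • (s_k + f (k+1))`, so that
`s_k = δ^k f 0 + δ^k f 1 + δ^{k-1} f 2 + ⋯ + δ f k`. -/
def connSum {H : Submodule K L} (d : K) (f : ℕ → Module.Dual K H) : ℕ → Module.Dual K H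
  | 0 => f 0
  | k + 1 => d • (connSum d f k + f (k + 1))

/-- `f 0, …, f n` is a connection from `α` to `β`: all terms are roots, `f 0 = α`,
all proper δ-twisted partial sums are roots, and the final sum is `±β`. -/
def IsConnection (J : DeltaJordanLie K L) (H : Submodule K L)
    (α β : Module.Dual K H) (n : ℕ) (f : ℕ → Module.Dual K H) : Prop :=
  (∀ i ≤ n, f i ∈ J.roots H) ∧ f 0 = α ∧
  (∀ k < n, connSum J.delta f k ∈ J.roots H) ∧
  (connSum J.delta f n = β ∨ connSum J.delta f n = -β)

/-- `α` and `β` are connected. -/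
def Connected (J : DeltaJordanLie K L) (H : Submodule K L)
    (α β : Module.Dual K H) : Prop :=
  ∃ n f, IsConnection J H α β n f

/-- `Λ_α`: the set of nonzero roots connected to `α`. -/
def connectedRoots (J : DeltaJordanLie K L) (H : Submodule K L)
    (α : Module.Dual K H) : Set (Module.Dual K H) :=
  {β ∈ J.roots H | Connected J H α β}

/-- An ideal of a δ Jordan-Lie algebra: a submodule with `[I,L] ⊆ I` and `[L,I] ⊆ I`. -/
def IsIdeal (J : DeltaJordanLie K L) (I : Submodule K L) : Prop :=
  ∀ x ∈ I, ∀ y : L, J.br x y ∈ I ∧ J.br y x ∈ I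

/-- `H_S = span{[L_β, L_{-β}] : β ∈ S}`. -/
def rootSpan (J : DeltaJordanLie K L) (H : Submodule K L)
    (S : Set (Module.Dual K H)) : Submodule K L :=
  Submodule.span K {z : L | ∃ β ∈ S, ∃ x ∈ J.rootSpace H β, ∃ y ∈ J.rootSpace H (-β),
    z = J.br x y}

/-- `L_S = H_S ⊕ V_S`, the subalgebra associated to a set of roots `S`. -/
def decIdeal (J : DeltaJordanLie K L) (H : Submodule K L)
    (S : Set (Module.Dual K H)) : Submodule K L :=
  rootSpan J H S ⊔ ⨆ β ∈ S, J.rootSpace H β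

lemma smul_eq_self_or_eq_neg_of_mul_self_eq_one {R M : Type*} [Ring R] [NoZeroDivisors R]
    [AddCommGroup M] [Module R M] {c : R} (hc : c * c = 1) (x : M) : c • x = x ∨ c • x = -x := by
  rcases mul_self_eq_one_iff.mp hc with rfl | rfl
  exacts [.inl (one_smul R x), .inr (neg_one_smul R x)]

lemma exists_mul_self_eq_one_smul_eq {R M : Type*} [Ring R] [AddCommGroup M] [Module R M]
    {x y : M} (h : x = y ∨ x = -y) : ∃ c : R, c * c = 1 ∧ x = c • y := by
  rcases h with rfl | rfl
  exacts [⟨1, mul_one 1, (one_smul R x).symm⟩, ⟨-1, by simp, (neg_one_smul R y).symm⟩]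

lemma iSupIndep.biSup_inf_biSup {α ι : Type*} [CompleteLattice α] [IsModularLattice α]
    [IsCompactlyGenerated α] {f : ι → α} (hf : iSupIndep f) (s t : Set ι) :
    (⨆ i ∈ s, f i) ⊓ (⨆ i ∈ t, f i) = ⨆ i ∈ s ∩ t, f i := by
  have hsplit : (⨆ i ∈ s, f i) = (⨆ i ∈ s ∩ t, f i) ⊔ ⨆ i ∈ s \ t, f i := by
    rw [← iSup_union, Set.inter_union_sdiff]
  have hdisj : Disjoint (⨆ i ∈ s \ t, f i) (⨆ i ∈ t, f i) :=
    hf.disjoint_biSup_biSup Set.disjoint_sdiff_left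
  have hle : (⨆ i ∈ s ∩ t, f i) ≤ ⨆ i ∈ t, f i := biSup_mono fun _ hi => hi.2
  rw [hsplit, sup_inf_assoc_of_le _ hle, hdisj.eq_bot, sup_bot_eq]

namespace DeltaJordanLie

variable {J : DeltaJordanLie K L} {H : Submodule K L}

lemma delta_mul_self (J : DeltaJordanLie K L) : J.delta * J.delta = 1 := by
  rcases J.delta_pm with h | h <;> rw [h] <;> norm_num

lemma delta_ne_zero (J : DeltaJordanLie K L) : J.delta ≠ 0 :=
  left_ne_zero_of_mul_eq_one J.delta_mul_self

lemma br_mem_rootSpace {α β : Module.Dual K H} {x y : L}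
    (hx : x ∈ J.rootSpace H α) (hy : y ∈ J.rootSpace H β) :
    J.br x y ∈ J.rootSpace H (J.delta • (α + β)) := by
  intro h
  rw [J.jacobi (h : L) x y, hx h, hy h, map_smul, LinearMap.smul_apply, map_smul, smul_smul,
    smul_smul, ← add_smul]
  simp only [LinearMap.smul_apply, LinearMap.add_apply, smul_eq_mul]
  ring_nf

lemma eq_zero_of_mem_rootSpace {α : Module.Dual K H} {x : L} (h0 : α ≠ 0)
    (hα : α ∉ J.roots H) (hx : x ∈ J.rootSpace H α) : x = 0 := by
  have hbot : J.rootSpace H α = ⊥ := not_not.mp fun hne => hα ⟨h0, hne⟩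
  simpa [hbot] using hx

lemma SymmetricRoots.smul_mem (hsym : J.SymmetricRoots H) {c : K} (hc : c * c = 1)
    {α : Module.Dual K H} (hα : α ∈ J.roots H) : c • α ∈ J.roots H := by
  rcases smul_eq_self_or_eq_neg_of_mul_self_eq_one hc α with h | h <;> rw [h]
  exacts [hα, hsym α hα]

end DeltaJordanLie

section connSum

variable {H : Submodule K L} {d : K}

lemma connSum_smul (c : K) (f : ℕ → Module.Dual K H) (k : ℕ) :
    connSum d (c • f) k = c • connSum d f k := by
  induction k with
  | zero => rfl
  | succ k ih => simp only [connSum, ih, Pi.smul_apply, smul_add, smul_comm d c]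

lemma connSum_congr {f g : ℕ → Module.Dual K H} {n : ℕ} (h : ∀ i ≤ n, f i = g i) :
    connSum d f n = connSum d g n := by
  induction n with
  | zero => exact h 0 le_rfl
  | succ n ih => simp only [connSum, ih fun i hi => h i (by omega), h (n + 1) le_rfl]

lemma connSum_append {f g h : ℕ → Module.Dual K H} {n : ℕ} (hf : ∀ i ≤ n, h i = f i)
    (hg : ∀ k, h (n + k + 1) = g (k + 1)) (hfg : connSum d f n = g 0) (k : ℕ) :
    connSum d h (n + k) = connSum d g k := by
  induction k with
  | zero => exact (connSum_congr hf).trans hfg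
  | succ k ih => rw [← add_assoc]; simp only [connSum, ih, hg]

lemma connSum_reverse (hd : d * d = 1) {f g : ℕ → Module.Dual K H} {n : ℕ}
    (h0 : g 0 = connSum d f n) (hg : ∀ k < n, g (k + 1) = -d • f (n - k)) :
    ∀ k ≤ n, connSum d g k = connSum d f (n - k) := by
  intro k hk
  induction k with
  | zero => exact h0
  | succ k ih =>
    obtain ⟨m, hm⟩ : ∃ m, n - k = m + 1 := ⟨n - k - 1, by omega⟩
    rw [connSum, ih (by omega), hg k (by omega), hm, show n - (k + 1) = m by omega, connSum]
    simp only [smul_add, smul_smul, hd, one_smul, mul_neg, neg_smul, add_neg_cancel_right]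

end connSum

namespace Connected

variable {J : DeltaJordanLie K L} {H : Submodule K L} {α β γ : Module.Dual K H}

lemma refl (hα : α ∈ J.roots H) : Connected J H α α :=
  ⟨0, fun _ => α, fun _ _ => hα, rfl, fun k hk => absurd hk k.not_lt_zero, .inl rfl⟩

lemma neg_right (hα : α ∈ J.roots H) : Connected J H α (-α) :=
  ⟨0, fun _ => α, fun _ _ => hα, rfl, fun k hk => absurd hk k.not_lt_zero, .inr (neg_neg α).symm⟩

lemma delta_smul_add (hα : α ∈ J.roots H) (hγ : γ ∈ J.roots H) :
    Connected J H α (J.delta • (α + γ)) := by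
  refine ⟨1, fun i => if i = 0 then α else γ, ?_, rfl, ?_, .inl rfl⟩
  · intro i _
    by_cases h : i = 0 <;> simp [h, hα, hγ]
  · intro k hk
    obtain rfl : k = 0 := by omega
    exact hα

lemma symm (hsym : J.SymmetricRoots H) (hβ : β ∈ J.roots H) (h : Connected J H α β) :
    Connected J H β α := by
  obtain ⟨n, f, hf_roots, rfl, hf_sums, hf_end⟩ := h
  obtain ⟨c, hc, hfc⟩ := exists_mul_self_eq_one_smul_eq (R := K) hf_end
  have hcβ : c • connSum J.delta f n = β := by rw [hfc, smul_smul, hc, one_smul]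
  let g : ℕ → Module.Dual K H := fun i =>
    Nat.casesOn i (connSum J.delta f n) fun k => -J.delta • f (n - k)
  have hg := connSum_reverse J.delta_mul_self (g := g) rfl fun _ _ => rfl
  refine ⟨n, c • g, ?_, hcβ, ?_, ?_⟩
  · rintro (_ | i) hi
    · change c • connSum J.delta f n ∈ J.roots H
      exact hcβ ▸ hβ
    · change c • -J.delta • f (n - i) ∈ J.roots H
      rw [smul_smul]
      refine hsym.smul_mem ?_ (hf_roots _ (Nat.sub_le n i))
      rw [mul_mul_mul_comm, hc, neg_mul_neg, J.delta_mul_self, one_mul]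
  · rintro (_ | k) hk
    · change c • connSum J.delta f n ∈ J.roots H
      exact hcβ ▸ hβ
    · rw [connSum_smul, hg _ hk.le]
      exact hsym.smul_mem hc (hf_sums _ (by omega))
  · rw [connSum_smul, hg n le_rfl, Nat.sub_self]
    change c • f 0 = f 0 ∨ c • f 0 = -f 0
    exact smul_eq_self_or_eq_neg_of_mul_self_eq_one hc (f 0)

lemma trans (hsym : J.SymmetricRoots H) (h₁ : Connected J H α β) (h₂ : Connected J H β γ) :
    Connected J H α γ := by
  obtain ⟨n, f, hf_roots, hf0, hf_sums, hf_end⟩ := h₁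
  obtain ⟨m, g, hg_roots, rfl, hg_sums, hg_end⟩ := h₂
  obtain ⟨c, hc, hfc⟩ := exists_mul_self_eq_one_smul_eq (R := K) hf_end
  obtain ⟨c', hc', hgc'⟩ := exists_mul_self_eq_one_smul_eq (R := K) hg_end
  let h : ℕ → Module.Dual K H := fun i => if i ≤ n then f i else c • g (i - n)
  have hh (k : ℕ) : connSum J.delta h (n + k) = c • connSum J.delta g k := by
    rw [← connSum_smul]
    refine connSum_append (fun i hi => if_pos hi) (fun k => ?_) hfc k
    simp only [Pi.smul_apply, if_neg (by omega : ¬ n + k + 1 ≤ n)]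
    congr 2
    omega
  refine ⟨n + m, h, fun i hi => ?_, by simp [h, hf0], fun k hk => ?_, ?_⟩
  · by_cases hin : i ≤ n
    · simpa [h, hin] using hf_roots i hin
    · simpa [h, hin] using hsym.smul_mem hc (hg_roots (i - n) (by omega))
  · by_cases hkn : k < n
    · rw [connSum_congr fun i hi => if_pos (by omega : i ≤ n)]
      exact hf_sums k hkn
    · obtain ⟨j, rfl⟩ := Nat.exists_eq_add_of_le (not_lt.mp hkn)
      rw [hh]
      exact hsym.smul_mem hc (hg_sums j (by omega))
  · rw [hh, hgc', smul_smul]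
    refine smul_eq_self_or_eq_neg_of_mul_self_eq_one ?_ γ
    rw [mul_mul_mul_comm, hc, hc', one_mul]

end Connected

namespace DeltaJordanLie

variable {J : DeltaJordanLie K L} {H : Submodule K L}

lemma br_eq_zero_of_not_connected (hsym : J.SymmetricRoots H) {ε γ : Module.Dual K H}
    (hε : ε ∈ J.roots H) (hγ : γ ∈ J.roots H) (hεγ : ¬ Connected J H ε γ) {x v : L}
    (hx : x ∈ J.rootSpace H ε) (hv : v ∈ J.rootSpace H γ) : J.br x v = 0 := by
  have hρ0 : J.delta • (ε + γ) ≠ 0 := by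
    rw [smul_ne_zero_iff_right J.delta_ne_zero, Ne, add_eq_zero_iff_eq_neg']
    rintro rfl
    exact hεγ (.neg_right hε)
  refine eq_zero_of_mem_rootSpace hρ0 (fun hρ => hεγ ?_) (br_mem_rootSpace hx hv)
  have hγρ : Connected J H (J.delta • (ε + γ)) γ := by
    rw [add_comm]
    exact (Connected.delta_smul_add hγ hε).symm hsym (add_comm ε γ ▸ hρ)
  exact (Connected.delta_smul_add hε hγ).trans hsym hγρ

lemma br_br_eq_zero_of_not_connected (hsym : J.SymmetricRoots H) {ε γ : Module.Dual K H}
    (hε : ε ∈ J.roots H) (hγ : γ ∈ J.roots H) (hεγ : ¬ Connected J H ε γ) {e f v : L}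
    (he : e ∈ J.rootSpace H ε) (hf : f ∈ J.rootSpace H (-ε)) (hv : v ∈ J.rootSpace H γ) :
    J.br (J.br e f) v = 0 := by
  have hev : J.br e v = 0 := br_eq_zero_of_not_connected hsym hε hγ hεγ he hv
  have hfv : J.br f v = 0 :=
    br_eq_zero_of_not_connected hsym (hsym ε hε) hγ
      (fun h => hεγ ((Connected.neg_right hε).trans hsym h)) hf hv
  have hjacobi := J.jacobi e f v
  rw [hfv, hev, map_zero, map_zero, smul_zero, add_zero, eq_comm,
    smul_eq_zero_iff_right J.delta_ne_zero] at hjacobi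
  exact hjacobi

lemma rootSpan_le (hs : J.IsSplitting H) (S : Set (Module.Dual K H)) : rootSpan J H S ≤ H := by
  refine Submodule.span_le.mpr ?_
  rintro _ ⟨β, -, x, hx, y, hy, rfl⟩
  have hxy := br_mem_rootSpace hx hy
  rwa [add_neg_cancel, smul_zero, hs.zero_rootSpace] at hxy

end DeltaJordanLie

section decIdeal

open DeltaJordanLie

variable {J : DeltaJordanLie K L} {H : Submodule K L} {S T : Set (Module.Dual K H)}

lemma rootSpace_le_decIdeal {β : Module.Dual K H} (hβ : β ∈ S) :
    J.rootSpace H β ≤ decIdeal J H S :=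
  (le_biSup (J.rootSpace H) hβ).trans le_sup_right

lemma br_mem_decIdeal {β : Module.Dual K H} (hβ : β ∈ S) {x y : L}
    (hx : x ∈ J.rootSpace H β) (hy : y ∈ J.rootSpace H (-β)) : J.br x y ∈ decIdeal J H S :=
  le_sup_left (a := rootSpan J H S) (Submodule.subset_span ⟨β, hβ, x, hx, y, hy, rfl⟩)

lemma decIdeal_mono (hST : S ⊆ T) : decIdeal J H S ≤ decIdeal J H T := by
  refine sup_le_sup (Submodule.span_mono ?_) (biSup_mono hST)
  rintro _ ⟨β, hβ, hx⟩
  exact ⟨β, hST hβ, hx⟩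

lemma decIdeal_le_biSup_rootSpace (hs : J.IsSplitting H) (S : Set (Module.Dual K H)) :
    decIdeal J H S ≤ ⨆ γ ∈ insert 0 S, J.rootSpace H γ := by
  refine sup_le ?_ (biSup_mono fun _ => Set.mem_insert_of_mem 0)
  calc rootSpan J H S ≤ J.rootSpace H 0 := hs.zero_rootSpace.symm ▸ rootSpan_le hs S
    _ ≤ _ := le_biSup (J.rootSpace H) (Set.mem_insert 0 S)

lemma br_eq_zero_of_mem_decIdeal (hsym : J.SymmetricRoots H) {γ : Module.Dual K H}
    (hγ : γ ∈ J.roots H) (hS : ∀ β ∈ S, β ∈ J.roots H ∧ ¬ Connected J H β γ) {x v : L}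
    (hx : x ∈ decIdeal J H S) (hv : v ∈ J.rootSpace H γ) : J.br x v = 0 := by
  suffices decIdeal J H S ≤ LinearMap.ker (J.br.flip v) from this hx
  refine sup_le (Submodule.span_le.mpr ?_) (iSup₂_le fun β hβ u hu => ?_)
  · rintro _ ⟨β, hβ, e, he, f, hf, rfl⟩
    exact br_br_eq_zero_of_not_connected hsym (hS β hβ).1 hγ (hS β hβ).2 he hf hv
  · exact br_eq_zero_of_not_connected hsym (hS β hβ).1 hγ (hS β hβ).2 hu hv

end decIdeal

section DirectSum

open DeltaJordanLie

variable {J : DeltaJordanLie K L} {H : Submodule K L}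

lemma br_mem_iSup_decIdeal (hs : J.IsSplitting H) {γ γ' : Module.Dual K H} {u v : L}
    (hu : u ∈ J.rootSpace H γ) (hv : v ∈ J.rootSpace H γ') :
    J.br u v ∈ ⨆ α ∈ J.roots H, decIdeal J H (connectedRoots J H α) := by
  have hclass {α : Module.Dual K H} (hα : α ∈ J.roots H) :
      decIdeal J H (connectedRoots J H α) ≤ ⨆ α ∈ J.roots H, decIdeal J H (connectedRoots J H α) :=
    le_biSup (fun α => decIdeal J H (connectedRoots J H α)) hα
  by_cases hρ0 : J.delta • (γ + γ') = 0
  · obtain rfl : γ' = -γ := by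
      rwa [smul_eq_zero_iff_right J.delta_ne_zero, add_eq_zero_iff_eq_neg'] at hρ0
    by_cases hγ : γ ∈ J.roots H
    · exact hclass hγ (br_mem_decIdeal (S := connectedRoots J H γ) ⟨hγ, .refl hγ⟩ hu hv)
    by_cases hγ0 : γ = 0
    · subst hγ0
      rw [hs.zero_rootSpace] at hu
      rw [neg_zero, hs.zero_rootSpace] at hv
      simp [hs.abelian u hu v hv]
    · simp [eq_zero_of_mem_rootSpace hγ0 hγ hu]
  by_cases hρ : J.delta • (γ + γ') ∈ J.roots H
  · exact hclass hρ (rootSpace_le_decIdeal (S := connectedRoots J H _) ⟨hρ, .refl hρ⟩ (br_mem_rootSpace hu hv))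
  · simp [eq_zero_of_mem_rootSpace hρ0 hρ (br_mem_rootSpace hu hv)]

lemma iSup_decIdeal_connectedRoots_eq_top (hs : J.IsSplitting H)
    (hLL : Submodule.span K {z : L | ∃ x y : L, z = J.br x y} = ⊤) :
    (⨆ α ∈ J.roots H, decIdeal J H (connectedRoots J H α)) = ⊤ := by
  have hbrackets : Submodule.map₂ J.br ⊤ ⊤ = ⊤ := by
    have himage : Set.image2 (fun x y => J.br x y) ((⊤ : Submodule K L) : Set L) (⊤ : Submodule K L) =
        {z : L | ∃ x y : L, z = J.br x y} := by
      ext z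
      simp [eq_comm]
    rw [Submodule.map₂_eq_span_image2, himage, hLL]
  rw [eq_top_iff, ← hbrackets, ← hs.decomp, Submodule.map₂_iSup_left]
  refine iSup_le fun γ => ?_
  rw [Submodule.map₂_iSup_right]
  exact iSup_le fun γ' => Submodule.map₂_le.mpr fun u hu v hv => br_mem_iSup_decIdeal hs hu hv

lemma decIdeal_inf_decIdeal_eq_bot (hs : J.IsSplitting H) (hsym : J.SymmetricRoots H)
    (hZ : ∀ v : L, (∀ w : L, J.br v w = 0) → v = 0) {S T : Set (Module.Dual K H)}
    (hS : S ⊆ J.roots H) (hT : T ⊆ J.roots H)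
    (hST : ∀ β ∈ S, ∀ γ ∈ T, ¬ Connected J H β γ) (hcover : J.roots H ⊆ S ∪ T) :
    decIdeal J H S ⊓ decIdeal J H T = ⊥ := by
  refine eq_bot_iff.mpr fun x ⟨hxS, hxT⟩ => (Submodule.mem_bot K).mpr (hZ x fun w => ?_)
  have hxH : x ∈ H := by
    have hdisj : S ∩ T = ∅ :=
      Set.eq_empty_of_forall_notMem fun β ⟨hβS, hβT⟩ => hST β hβS β hβT (.refl (hS hβS))
    have hx := (inf_le_inf (decIdeal_le_biSup_rootSpace hs S)
      (decIdeal_le_biSup_rootSpace hs T)) ⟨hxS, hxT⟩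
    rwa [hs.indep.biSup_inf_biSup, ← Set.insert_inter_distrib, hdisj, insert_empty_eq,
      iSup_singleton, hs.zero_rootSpace] at hx
  have hroot (γ : Module.Dual K H) (v : L) (hv : v ∈ J.rootSpace H γ) : J.br x v = 0 := by
    by_cases hγ0 : γ = 0
    · subst hγ0
      exact hs.abelian x hxH v (hs.zero_rootSpace ▸ hv)
    by_cases hγ : γ ∈ J.roots H
    · rcases hcover hγ with hγS | hγT
      · exact br_eq_zero_of_mem_decIdeal hsym hγ
          (fun β hβ => ⟨hT hβ, fun h => hST γ hγS β hβ (h.symm hsym hγ)⟩) hxT hv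
      · exact br_eq_zero_of_mem_decIdeal hsym hγ (fun β hβ => ⟨hS hβ, hST β hβ γ hγT⟩) hxS hv
    · rw [eq_zero_of_mem_rootSpace hγ0 hγ hv, map_zero]
  have hw : w ∈ ⨆ γ, J.rootSpace H γ := hs.decomp ▸ Submodule.mem_top
  exact (iSup_le fun γ v hv => hroot γ v hv : _ ≤ LinearMap.ker (J.br x)) hw

end DirectSum

/-- if `Z(L) = 0` and `[L,L] = L` then `L` is the direct sum of the
ideals `I_{[α]}` associated to the connection classes. -/
theorem stmt10 (J : DeltaJordanLie K L) (H : Submodule K L) (hs : J.IsSplitting H)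
    (hsym : J.SymmetricRoots H)
    (hZ : ∀ v : L, (∀ w : L, J.br v w = 0) → v = 0)
    (hLL : Submodule.span K {z : L | ∃ x y : L, z = J.br x y} = ⊤) :
    (⨆ α ∈ J.roots H, decIdeal J H (connectedRoots J H α)) = ⊤ ∧
    ∀ α ∈ J.roots H,
      decIdeal J H (connectedRoots J H α) ⊓
        (⨆ β ∈ J.roots H, ⨆ _ : ¬ Connected J H α β,
          decIdeal J H (connectedRoots J H β)) = ⊥ := by
  refine ⟨iSup_decIdeal_connectedRoots_eq_top hs hLL, fun α hα => eq_bot_iff.mpr ?_⟩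
  let T := {γ | γ ∈ J.roots H ∧ ¬ Connected J H α γ}
  have hrest : (⨆ β ∈ J.roots H, ⨆ _ : ¬ Connected J H α β,
      decIdeal J H (connectedRoots J H β)) ≤ decIdeal J H T :=
    iSup₂_le fun β hβ => iSup_le fun hαβ => decIdeal_mono fun γ ⟨hγ, hβγ⟩ =>
      ⟨hγ, fun hαγ => hαβ (hαγ.trans hsym (hβγ.symm hsym hγ))⟩
  have hST : ∀ β ∈ connectedRoots J H α, ∀ γ ∈ T, ¬ Connected J H β γ :=
    fun β ⟨_, hαβ⟩ γ ⟨_, hαγ⟩ hβγ => hαγ (hαβ.trans hsym hβγ)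
  have hcover : J.roots H ⊆ connectedRoots J H α ∪ T := fun γ hγ =>
    (em (Connected J H α γ)).imp (⟨hγ, ·⟩) (⟨hγ, ·⟩)
  exact (inf_le_inf_left _ hrest).trans (decIdeal_inf_decIdeal_eq_bot hs hsym hZ
    (fun _ h => h.1) (fun _ h => h.1) hST hcover).le
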